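/- arXiv:1605.03357 — 2 statements merged into one kernel-verified Lean document; each statement's English description precedes it below -/
import Mathlib

section
/- Let N ≥ 3, let V(x) = ((N+2)/(N-2)) · (N(N-2)/(N(N-2)+|x|²))², and let η*(x) = |x| / (1 + |x|²/(N(N-2)))^(N/2). Then η* satisfies the eigenvalue equation -Δη*(x) - V(x)η*(x) = -(N-1) · η*(x)/|x|² for all x ∈ ℝ^N \ {0}. -/
/-!
Write `η* = φ ∘ ‖·‖²` with `φ t = √t / (1 + t / c) ^ p`, `c = N (N - 2)`, `p = N / 2`. Since `‖·‖²`
is smooth with gradient `2x`, the Laplacian of such a function is `2N φ'(t) + 4t φ''(t)` at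
`t = ‖x‖²`. After computing `φ'` and `φ''` explicitly, the equation becomes an identity between
rational expressions in `√t` and `(1 + t / c) ^ p`, checked by clearing denominators.
-/

/-- The Laplacian of a function on `EuclideanSpace ℝ (Fin N)`, as the sum of the
second partial derivatives in the coordinate directions. -/
noncomputable def laplacian {N : ℕ} (f : EuclideanSpace ℝ (Fin N) → ℝ)
    (x : EuclideanSpace ℝ (Fin N)) : ℝ :=
  ∑ i : Fin N,
    fderiv ℝ (fun y => fderiv ℝ f y (EuclideanSpace.single i (1 : ℝ))) x
      (EuclideanSpace.single i (1 : ℝ))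

open Real Filter Topology

theorem HasDerivAt.hasFDerivAt_comp_norm_sq {E : Type*} [NormedAddCommGroup E]
    [InnerProductSpace ℝ E] {φ : ℝ → ℝ} {φ' : ℝ} {x : E} (hφ : HasDerivAt φ φ' (‖x‖ ^ 2)) :
    HasFDerivAt (fun y => φ (‖y‖ ^ 2)) (φ' • 2 • innerSL ℝ x) x :=
  hφ.comp_hasFDerivAt x (hasStrictFDerivAt_norm_sq x).hasFDerivAt

theorem laplacian_comp_norm_sq {N : ℕ} {φ φ' : ℝ → ℝ} {φ'' : ℝ} {x : EuclideanSpace ℝ (Fin N)}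
    (hφ : ∀ᶠ t in 𝓝 (‖x‖ ^ 2), HasDerivAt φ (φ' t) t) (hφ' : HasDerivAt φ' φ'' (‖x‖ ^ 2)) :
    laplacian (fun y => φ (‖y‖ ^ 2)) x = 2 * N * φ' (‖x‖ ^ 2) + 4 * ‖x‖ ^ 2 * φ'' := by
  have hpartial : ∀ᶠ y in 𝓝 x, ∀ i, fderiv ℝ (fun y => φ (‖y‖ ^ 2)) y
      (EuclideanSpace.single i 1) = φ' (‖y‖ ^ 2) * (2 * y i) := by
    filter_upwards [((continuous_norm.pow 2).tendsto x).eventually hφ] with y hy i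
    simp [hy.hasFDerivAt_comp_norm_sq.fderiv, EuclideanSpace.inner_single_right]
  have hsecond : ∀ i, fderiv ℝ (fun y => fderiv ℝ (fun y => φ (‖y‖ ^ 2)) y
      (EuclideanSpace.single i 1)) x (EuclideanSpace.single i 1)
        = 2 * φ' (‖x‖ ^ 2) + 4 * φ'' * x i ^ 2 := by
    intro i
    have hprod : HasFDerivAt (fun y : EuclideanSpace ℝ (Fin N) => φ' (‖y‖ ^ 2) * (2 * y i)) _ x :=
      hφ'.hasFDerivAt_comp_norm_sq.mul ((EuclideanSpace.proj (𝕜 := ℝ) i).hasFDerivAt.const_mul 2)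
    rw [EventuallyEq.fderiv_eq (hpartial.mono fun y hy => hy i), hprod.fderiv]
    simp only [add_apply, smul_apply, PiLp.proj_apply, PiLp.single_eq_same, smul_eq_mul, mul_one,
      coe_innerSL_apply, EuclideanSpace.inner_single_right, ringHom_apply, one_mul, nsmul_eq_mul,
      Nat.cast_ofNat]
    ring
  simp only [laplacian, hsecond, Finset.sum_add_distrib, ← Finset.mul_sum,
    ← EuclideanSpace.real_norm_sq_eq, Finset.sum_const, Finset.card_univ, Fintype.card_fin,
    nsmul_eq_mul]
  ring

noncomputable def radialProfile (c p t : ℝ) : ℝ := √t / (1 + t / c) ^ p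

noncomputable def radialProfileDeriv (c p t : ℝ) : ℝ :=
  (c + (1 - 2 * p) * t) / (2 * c * √t * (1 + t / c) ^ (p + 1))

noncomputable def radialProfileDeriv2 (c p t : ℝ) : ℝ :=
  (4 * p * (p + 1) * t ^ 2 - 4 * p * t * (c + t) - (c + t) ^ 2) /
    (4 * c ^ 2 * t * √t * (1 + t / c) ^ (p + 2))

section
variable {c p t : ℝ}

theorem hasDerivAt_radialProfile (hc : 0 < c) (ht : 0 < t) :
    HasDerivAt (radialProfile c p) (radialProfileDeriv c p t) t := by
  have hu : 0 < 1 + t / c := by positivity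
  refine ((hasDerivAt_sqrt ht.ne').div
    ((((hasDerivAt_id t).div_const c).const_add 1).rpow_const (p := p) (Or.inl hu.ne'))
    (rpow_pos_of_pos hu p).ne').congr_deriv ?_
  simp only [id, radialProfileDeriv, rpow_add_one hu.ne', rpow_sub_one hu.ne']
  field_simp
  rw [sq_sqrt ht.le]
  ring

theorem hasDerivAt_radialProfileDeriv (hc : 0 < c) (ht : 0 < t) :
    HasDerivAt (radialProfileDeriv c p) (radialProfileDeriv2 c p t) t := by
  have hu : 0 < 1 + t / c := by positivity
  refine ((((hasDerivAt_id t).const_mul (1 - 2 * p)).const_add c).div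
    (((hasDerivAt_sqrt ht.ne').const_mul (2 * c)).mul
      ((((hasDerivAt_id t).div_const c).const_add 1).rpow_const (p := p + 1) (Or.inl hu.ne')))
    (by simp only [Pi.mul_apply, id]; positivity)).congr_deriv ?_
  simp only [id, Pi.mul_apply, radialProfileDeriv2, add_sub_cancel_right, rpow_add_one hu.ne',
    rpow_add hu p 2, rpow_two]
  field_simp
  rw [sq_sqrt ht.le]
  ring

end

theorem radialProfile_equation {n t : ℝ} (hn : 2 < n) (ht : 0 < t) :
    -(2 * n * radialProfileDeriv (n * (n - 2)) (n / 2) t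
        + 4 * t * radialProfileDeriv2 (n * (n - 2)) (n / 2) t)
      - (n + 2) / (n - 2) * (n * (n - 2) / (n * (n - 2) + t)) ^ 2
        * radialProfile (n * (n - 2)) (n / 2) t
      = -(n - 1) * radialProfile (n * (n - 2)) (n / 2) t / t := by
  have hn2 : 0 < n - 2 := by linarith
  have hu : 0 < 1 + t / (n * (n - 2)) := by positivity
  simp only [radialProfile, radialProfileDeriv, radialProfileDeriv2, rpow_add_one hu.ne',
    rpow_add hu _ 2, rpow_two]
  field_simp
  rw [sq_sqrt ht.le]
  ring

/-- η*(x) = |x|/(1+|x|²/(N(N-2)))^(N/2) satisfies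
`-Δη* - V η* = -(N-1) η*/|x|²` on ℝ^N \ {0}, where
V(x) = ((N+2)/(N-2))(N(N-2)/(N(N-2)+|x|²))². -/
theorem stmt2 (N : ℕ) (hN : 3 ≤ N) (V η : EuclideanSpace ℝ (Fin N) → ℝ)
    (hV : ∀ x, V x = (((N : ℝ) + 2) / ((N : ℝ) - 2)) *
        ((N : ℝ) * ((N : ℝ) - 2) / ((N : ℝ) * ((N : ℝ) - 2) + ‖x‖ ^ 2)) ^ 2)
    (hη : ∀ x, η x = ‖x‖ / (1 + ‖x‖ ^ 2 / ((N : ℝ) * ((N : ℝ) - 2))) ^ ((N : ℝ) / 2)) :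
    ∀ x : EuclideanSpace ℝ (Fin N), x ≠ 0 →
      -(laplacian η x) - V x * η x = -((N : ℝ) - 1) * η x / ‖x‖ ^ 2 := by
  intro x hx
  have hn : (2 : ℝ) < N := by exact_mod_cast hN
  have hc : (0 : ℝ) < N * (N - 2) := by nlinarith
  have ht : 0 < ‖x‖ ^ 2 := by positivity
  have hη_radialProfile : η = fun y => radialProfile (N * (N - 2)) (N / 2) (‖y‖ ^ 2) := by
    funext y
    rw [hη, radialProfile, sqrt_sq (norm_nonneg y)]
  rw [hV, hη_radialProfile, laplacian_comp_norm_sq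
    (eventually_gt_nhds ht |>.mono fun t ht => hasDerivAt_radialProfile hc ht)
    (hasDerivAt_radialProfileDeriv hc ht)]
  exact radialProfile_equation hn ht
end

section
/- Let N ≥ 3, 1 < p < (N+2)/(N-2), k = 2(N-1)/(N-2), 0 < t₁ < t₂, M > 0, and let y : [t₁,t₂] → ℝ be a C² solution of y'' + t^(-k)y^p = 0 with 0 < y ≤ M on (t₁,t₂), y' ≥ 0, y'(t₂)=0, y(t₂)=M, and satisfying the inequality (y'(t) t^(k-1) y(t)^(1-k))' + t^(k-2) y(t)^(-k) t₂^(1-k) M^(p+1) ≤ 0 on (t₁,t₂). Then for every t ∈ (t₁,t₂): y(t)^(2-k) - M^(2-k) ≥ (M^(p+1-k)(k-2)/(k-1)) t^(2-k) g((t/t₂)^(k-1)), where g(s) = 1/(k-2) + s - ((k-1)/(k-2)) s^((k-2)/(k-1)). -/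
/-!
With `c = M ^ (p + 1 - k)`, the bound `y ≤ M` turns the hypothesis into
`(y' t ^ (k - 1) y ^ (1 - k))' ≤ -c t₂ ^ (1 - k) t ^ (k - 2)`. Integrating from `t` to `t₂`, where
`y' ≥ 0`, gives `y' y ^ (1 - k) ≥ c / (k - 1) * (t ^ (1 - k) - t₂ ^ (1 - k))`. Since
`(y ^ (2 - k))' = (2 - k) y' y ^ (1 - k)` with `k > 2`, a second integration from `t` to `t₂`, using
`y t₂ = M`, bounds `y t ^ (2 - k) - M ^ (2 - k)` from below, and in the variable
`s = (t / t₂) ^ (k - 1)` that lower bound is `c (k - 2) / (k - 1) * t ^ (2 - k) * g s`.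
-/

open Set

theorem sub_le_sub_of_hasDerivAt_le {f g f' g' : ℝ → ℝ} {a b : ℝ} (hab : a ≤ b)
    (hf : ContinuousOn f (Icc a b)) (hg : ContinuousOn g (Icc a b))
    (hf' : ∀ x ∈ Ioo a b, HasDerivAt f (f' x) x) (hg' : ∀ x ∈ Ioo a b, HasDerivAt g (g' x) x)
    (hle : ∀ x ∈ Ioo a b, f' x ≤ g' x) : f b - f a ≤ g b - g a := by
  have hmono : MonotoneOn (fun x => g x - f x) (Icc a b) := by
    refine monotoneOn_of_hasDerivWithinAt_nonneg (convex_Icc a b) (hg.sub hf)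
      (f' := fun x => g' x - f' x) (fun x hx => ?_) (fun x hx => ?_) <;> rw [interior_Icc] at hx
    · exact ((hg' x hx).sub (hf' x hx)).hasDerivWithinAt
    · exact sub_nonneg.2 (hle x hx)
  have := hmono (left_mem_Icc.2 hab) (right_mem_Icc.2 hab) hab
  linarith

theorem hasDerivAt_rpow_div_self {e r : ℝ} (hr : 0 < r) (he : e ≠ 0) :
    HasDerivAt (fun x => x ^ e / e) (r ^ (e - 1)) r := by
  have := (Real.hasDerivAt_rpow_const (p := e) (Or.inl hr.ne')).div_const e
  rwa [mul_div_cancel_left₀ _ he] at this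

theorem continuousOn_rpow_div_self {e a b : ℝ} (ha : 0 < a) (he : e ≠ 0) :
    ContinuousOn (fun x => x ^ e / e) (Icc a b) := fun _ hx =>
  (hasDerivAt_rpow_div_self (ha.trans_le hx.1) he).continuousAt.continuousWithinAt

theorem rpow_one_sub_mul_rpow_sub_one {x k : ℝ} (hx : 0 < x) : x ^ (1 - k) * x ^ (k - 1) = 1 := by
  rw [← Real.rpow_add hx]; norm_num

theorem rpow_sub_le_rpow_neg_mul_rpow {x M q k : ℝ} (hx : 0 < x) (hxM : x ≤ M) (hk : 0 ≤ k) :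
    M ^ (q - k) ≤ x ^ (-k) * M ^ q := by
  rw [sub_eq_add_neg, Real.rpow_add (hx.trans_le hxM), mul_comm]
  exact mul_le_mul_of_nonneg_right (Real.rpow_le_rpow_of_nonpos hx hxM (neg_nonpos.2 hk))
    (Real.rpow_nonneg (hx.le.trans hxM) _)

theorem two_lt_two_mul_sub_one_div_sub_two {n : ℝ} (hn : 2 < n) : 2 < 2 * (n - 1) / (n - 2) := by
  rw [lt_div_iff₀ (sub_pos.2 hn)]
  linarith

theorem ContDiffOn.differentiableAt_of_mem_Ioo {y : ℝ → ℝ} {a b r : ℝ}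
    (hy : ContDiffOn ℝ 1 y (Icc a b)) (hr : r ∈ Ioo a b) : DifferentiableAt ℝ y r :=
  (hy.differentiableOn one_ne_zero r (Ioo_subset_Icc_self hr)).differentiableAt
    (Icc_mem_nhds hr.1 hr.2)

theorem ContDiffOn.differentiableAt_deriv_of_mem_Ioo {y : ℝ → ℝ} {a b r : ℝ}
    (hy : ContDiffOn ℝ 2 y (Icc a b)) (hr : r ∈ Ioo a b) : DifferentiableAt ℝ (deriv y) r :=
  ((hy.mono Ioo_subset_Icc_self).deriv_of_isOpen isOpen_Ioo (m := 1) (by norm_num)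
    |>.differentiableOn one_ne_zero r hr).differentiableAt (isOpen_Ioo.mem_nhds hr)

theorem derivWithin_Icc_right_nonneg {y : ℝ → ℝ} {a b : ℝ} (hab : a < b)
    (hy : ContDiffOn ℝ 1 y (Icc a b)) (hmono : ∀ r ∈ Ioo a b, 0 ≤ deriv y r) :
    0 ≤ derivWithin y (Icc a b) b := by
  have hw : ContinuousOn (derivWithin y (Icc a b)) (closure (Ioo a b)) := by
    rw [closure_Ioo hab.ne]; exact hy.continuousOn_derivWithin (uniqueDiffOn_Icc hab) le_rfl
  refine le_on_closure (fun r hr => ?_) continuousOn_const hw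
    (by rw [closure_Ioo hab.ne]; exact right_mem_Icc.2 hab.le)
  rw [derivWithin_of_mem_nhds (Icc_mem_nhds hr.1 hr.2)]
  exact hmono r hr

theorem hasDerivAt_derivWithin_mul_rpow_mul_rpow {y : ℝ → ℝ} {a b r e e' : ℝ}
    (hy : ContDiffOn ℝ 2 y (Icc a b)) (hr : r ∈ Ioo a b) (hr₀ : r ≠ 0) (hyr : y r ≠ 0) :
    HasDerivAt (fun s => derivWithin y (Icc a b) s * s ^ e * y s ^ e')
      (deriv (fun s => deriv y s * s ^ e * y s ^ e') r) r := by
  have hd : DifferentiableAt ℝ (fun s => deriv y s * s ^ e * y s ^ e') r :=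
    ((hy.differentiableAt_deriv_of_mem_Ioo hr).mul
      (differentiableAt_id.rpow_const (Or.inl hr₀))).mul (((hy.of_le one_le_two).differentiableAt_of_mem_Ioo hr).rpow_const (Or.inl hyr))
  refine hd.hasDerivAt.congr_of_eventuallyEq ?_
  filter_upwards [isOpen_Ioo.mem_nhds hr] with u hu
  rw [derivWithin_of_mem_nhds (Icc_mem_nhds hu.1 hu.2)]

theorem le_deriv_mul_rpow_of_deriv_le {y : ℝ → ℝ} {t₁ t₂ k c s : ℝ} (ht₁ : 0 < t₁) (hk : 1 < k)
    (hy : ContDiffOn ℝ 2 y (Icc t₁ t₂)) (hpos : ∀ r ∈ Ioc t₁ t₂, 0 < y r)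
    (hmono : ∀ r ∈ Ioo t₁ t₂, 0 ≤ deriv y r)
    (hslope : ∀ r ∈ Ioo t₁ t₂, deriv (fun s => deriv y s * s ^ (k - 1) * y s ^ (1 - k)) r
      + c * t₂ ^ (1 - k) * r ^ (k - 2) ≤ 0)
    (hs : s ∈ Ioo t₁ t₂) :
    c / (k - 1) * (s ^ (1 - k) - t₂ ^ (1 - k)) ≤ deriv y s * y s ^ (1 - k) := by
  have ht : t₁ < t₂ := hs.1.trans hs.2
  have hs₀ : 0 < s := ht₁.trans hs.1
  have hk1 : k - 1 ≠ 0 := (sub_pos.2 hk).ne'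
  have hsub : Icc s t₂ ⊆ Icc t₁ t₂ := Icc_subset_Icc_left hs.1.le
  -- `deriv y t₂` depends on `y` outside `[t₁, t₂]`; the one-sided derivative `w` is the
  -- continuous extension of `y'` to `t₂`.
  set w := derivWithin y (Icc t₁ t₂)
  have hFs : c * t₂ ^ (1 - k) * (t₂ ^ (k - 1) - s ^ (k - 1)) / (k - 1)
      ≤ deriv y s * s ^ (k - 1) * y s ^ (1 - k) := by
    have hint := sub_le_sub_of_hasDerivAt_le (f := fun r => w r * r ^ (k - 1) * y r ^ (1 - k))
      (g := fun r => -(c * t₂ ^ (1 - k)) * (r ^ (k - 1) / (k - 1))) hs.2.le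
      ((((hy.continuousOn_derivWithin (uniqueDiffOn_Icc ht) one_le_two).mono hsub).mul
        (continuousOn_id.rpow_const fun r hr => Or.inl (hs₀.trans_le hr.1).ne')).mul
        ((hy.continuousOn.mono hsub).rpow_const fun r hr =>
          Or.inl (hpos r ⟨hs.1.trans_le hr.1, hr.2⟩).ne'))
      (continuousOn_const.mul (continuousOn_rpow_div_self hs₀ hk1))
      (fun r hr => hasDerivAt_derivWithin_mul_rpow_mul_rpow hy ⟨hs.1.trans hr.1, hr.2⟩
        (hs₀.trans hr.1).ne' (hpos r ⟨hs.1.trans hr.1, hr.2.le⟩).ne')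
      (fun r hr => (hasDerivAt_rpow_div_self (hs₀.trans hr.1) hk1).const_mul _)
      (fun r hr => by
        rw [show k - 1 - 1 = k - 2 by ring]
        linarith [hslope r ⟨hs.1.trans hr.1, hr.2⟩])
    have hFt₂ : 0 ≤ w t₂ * t₂ ^ (k - 1) * y t₂ ^ (1 - k) :=
      mul_nonneg (mul_nonneg (derivWithin_Icc_right_nonneg ht (hy.of_le one_le_two) hmono)
        (Real.rpow_nonneg (ht₁.trans ht).le _))
        (Real.rpow_nonneg (hpos t₂ (right_mem_Ioc.2 ht)).le _)
    have hws : w s = deriv y s := derivWithin_of_mem_nhds (Icc_mem_nhds hs.1 hs.2)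
    rw [hws] at hint
    linear_combination hint + hFt₂
  have hs1 := rpow_one_sub_mul_rpow_sub_one (k := k) hs₀
  have ht1 := rpow_one_sub_mul_rpow_sub_one (k := k) (ht₁.trans ht)
  calc c / (k - 1) * (s ^ (1 - k) - t₂ ^ (1 - k))
      = s ^ (1 - k) * (c * t₂ ^ (1 - k) * (t₂ ^ (k - 1) - s ^ (k - 1)) / (k - 1)) := by
        linear_combination c / (k - 1) * (t₂ ^ (1 - k) * hs1 - s ^ (1 - k) * ht1)
    _ ≤ s ^ (1 - k) * (deriv y s * s ^ (k - 1) * y s ^ (1 - k)) :=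
        mul_le_mul_of_nonneg_left hFs (Real.rpow_nonneg hs₀.le _)
    _ = deriv y s * y s ^ (1 - k) := by linear_combination deriv y s * y s ^ (1 - k) * hs1

theorem le_rpow_sub_rpow_of_le_deriv_mul_rpow {y : ℝ → ℝ} {a b k c : ℝ} (ha : 0 < a) (hab : a ≤ b)
    (hk : 2 < k) (hy : ContDiffOn ℝ 1 y (Icc a b)) (hpos : ∀ r ∈ Icc a b, 0 < y r)
    (hfirst : ∀ r ∈ Ioo a b,
      c / (k - 1) * (r ^ (1 - k) - b ^ (1 - k)) ≤ deriv y r * y r ^ (1 - k)) :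
    c / (k - 1) * (a ^ (2 - k) + (k - 2) * b ^ (1 - k) * a - (k - 1) * b ^ (2 - k))
      ≤ y a ^ (2 - k) - y b ^ (2 - k) := by
  have hint := sub_le_sub_of_hasDerivAt_le (f := fun r => y r ^ (2 - k))
    (g := fun r => c / (k - 1) * ((k - 2) * b ^ (1 - k) * r + r ^ (2 - k))) hab
    (hy.continuousOn.rpow_const fun r hr => Or.inl (hpos r hr).ne')
    (continuousOn_const.mul ((continuousOn_const.mul continuousOn_id).add
      (continuousOn_id.rpow_const fun r hr => Or.inl (ha.trans_le hr.1).ne')))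
    (fun r hr => (hy.differentiableAt_of_mem_Ioo hr).hasDerivAt.rpow_const
      (Or.inl (hpos r (Ioo_subset_Icc_self hr)).ne'))
    (fun r hr => (((hasDerivAt_id r).const_mul _).add
      (Real.hasDerivAt_rpow_const (Or.inl (ha.trans hr.1).ne'))).const_mul _)
    (fun r hr => by
      rw [show (2 : ℝ) - k - 1 = 1 - k by ring]
      linear_combination (k - 2) * hfirst r hr)
  have hb : b ^ (1 - k) * b = b ^ (2 - k) := by
    rw [← Real.rpow_add_one (ha.trans_le hab).ne']; ring_nf
  linear_combination hint + c / (k - 1) * (k - 2) * hb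

theorem rpow_two_sub_mul_profile {g : ℝ → ℝ} {a b k : ℝ}
    (hg : ∀ s : ℝ, g s = 1 / (k - 2) + s - ((k - 1) / (k - 2)) * s ^ ((k - 2) / (k - 1)))
    (ha : 0 < a) (hb : 0 < b) (hk1 : k ≠ 1) (hk2 : k ≠ 2) :
    (k - 2) * (a ^ (2 - k) * g ((a / b) ^ (k - 1)))
      = a ^ (2 - k) + (k - 2) * b ^ (1 - k) * a - (k - 1) * b ^ (2 - k) := by
  have hpow : ∀ e, a ^ (2 - k) * (a / b) ^ (k - 2 + e) = a ^ e * b ^ (2 - k - e) := by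
    intro e
    rw [Real.div_rpow ha.le hb.le, mul_div_assoc', ← Real.rpow_add ha, div_eq_mul_inv,
      ← Real.rpow_neg hb.le]
    ring_nf
  have h1 : a ^ (2 - k) * (a / b) ^ (k - 1) = a * b ^ (1 - k) := by
    rw [show k - 1 = k - 2 + 1 by ring, hpow, Real.rpow_one]; ring_nf
  have h2 : a ^ (2 - k) * (a / b) ^ (k - 2) = b ^ (2 - k) := by
    rw [← add_zero (k - 2), hpow, Real.rpow_zero, one_mul, sub_zero]
  rw [hg, ← Real.rpow_mul (div_pos ha hb).le, mul_div_cancel₀ _ (sub_ne_zero.2 hk1)]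
  field_simp [sub_ne_zero.2 hk2]
  linear_combination (k - 2) * h1 - (k - 1) * h2

theorem stmt11_general (N : ℕ) (hN : 3 ≤ N) (p k t₁ t₂ M : ℝ)
    (hk : k = 2 * ((N : ℝ) - 1) / ((N : ℝ) - 2))
    (ht : 0 < t₁) (ht2 : t₁ < t₂) (hM : 0 < M) (y : ℝ → ℝ)
    (hy : ContDiffOn ℝ 2 y (Set.Icc t₁ t₂))
    (hpos : ∀ t ∈ Set.Ioo t₁ t₂, 0 < y t)
    (hbd : ∀ t ∈ Set.Ioo t₁ t₂, y t ≤ M)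
    (hmono : ∀ t ∈ Set.Ioo t₁ t₂, 0 ≤ deriv y t)
    (hyt2 : y t₂ = M)
    (hineq : ∀ t ∈ Set.Ioo t₁ t₂,
      deriv (fun s => deriv y s * s ^ (k - 1) * (y s) ^ (1 - k)) t
        + t ^ (k - 2) * (y t) ^ (-k) * t₂ ^ (1 - k) * M ^ (p + 1) ≤ 0)
    (g : ℝ → ℝ)
    (hg : ∀ s : ℝ, g s = 1 / (k - 2) + s - ((k - 1) / (k - 2)) * s ^ ((k - 2) / (k - 1))) :
    ∀ t ∈ Set.Ioo t₁ t₂,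
      (M ^ (p + 1 - k) * (k - 2) / (k - 1)) * t ^ (2 - k) * g ((t / t₂) ^ (k - 1))
        ≤ (y t) ^ (2 - k) - M ^ (2 - k) := by
  intro t ht'
  have hk2 : 2 < k := hk ▸ two_lt_two_mul_sub_one_div_sub_two (by exact_mod_cast hN)
  have ht₂ : 0 < t₂ := ht.trans ht2
  have hpos' : ∀ r ∈ Ioc t₁ t₂, 0 < y r := fun r hr =>
    hr.2.eq_or_lt.elim (fun h => h ▸ hyt2 ▸ hM) fun h => hpos r ⟨hr.1, h⟩
  have hslope : ∀ r ∈ Ioo t₁ t₂, deriv (fun s => deriv y s * s ^ (k - 1) * y s ^ (1 - k)) r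
      + M ^ (p + 1 - k) * t₂ ^ (1 - k) * r ^ (k - 2) ≤ 0 := fun r hr => by
    have hr₀ : 0 < r := ht.trans hr.1
    linear_combination hineq r hr + t₂ ^ (1 - k) * r ^ (k - 2) *
      rpow_sub_le_rpow_neg_mul_rpow (q := p + 1) (k := k) (hpos r hr) (hbd r hr) (by linarith)
  have hsub : Icc t t₂ ⊆ Icc t₁ t₂ := Icc_subset_Icc_left ht'.1.le
  have hsecond := le_rpow_sub_rpow_of_le_deriv_mul_rpow (ht.trans ht'.1) ht'.2.le hk2
    ((hy.mono hsub).of_le one_le_two) (fun r hr => hpos' r ⟨ht'.1.trans_le hr.1, hr.2⟩)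
    (fun r hr => le_deriv_mul_rpow_of_deriv_le ht (by linarith) hy hpos' hmono hslope
      ⟨ht'.1.trans hr.1, hr.2⟩)
  rw [hyt2] at hsecond
  calc _ = M ^ (p + 1 - k) / (k - 1) * ((k - 2) * (t ^ (2 - k) * g ((t / t₂) ^ (k - 1)))) := by
        ring
    _ = _ := by
        rw [rpow_two_sub_mul_profile hg (ht.trans ht'.1) ht₂ (by linarith) (by linarith)]
    _ ≤ _ := hsecond

/-- integrating the differential inequality for the Emden–Fowler
solution yields the pointwise lower bound involving
g(s) = 1/(k-2) + s - ((k-1)/(k-2)) s^((k-2)/(k-1)). -/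
theorem stmt11 (N : ℕ) (hN : 3 ≤ N) (p k t₁ t₂ M : ℝ)
    (hk : k = 2 * ((N : ℝ) - 1) / ((N : ℝ) - 2)) (hp : 1 < p)
    (hp2 : p < ((N : ℝ) + 2) / ((N : ℝ) - 2))
    (ht : 0 < t₁) (ht2 : t₁ < t₂) (hM : 0 < M) (y : ℝ → ℝ)
    (hy : ContDiffOn ℝ 2 y (Set.Icc t₁ t₂))
    (hode : ∀ t ∈ Set.Ioo t₁ t₂, deriv (deriv y) t + t ^ (-k) * (y t) ^ p = 0)
    (hpos : ∀ t ∈ Set.Ioo t₁ t₂, 0 < y t)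
    (hbd : ∀ t ∈ Set.Ioo t₁ t₂, y t ≤ M)
    (hmono : ∀ t ∈ Set.Ioo t₁ t₂, 0 ≤ deriv y t)
    (hyt2 : y t₂ = M) (hy't2 : deriv y t₂ = 0)
    (hineq : ∀ t ∈ Set.Ioo t₁ t₂,
      deriv (fun s => deriv y s * s ^ (k - 1) * (y s) ^ (1 - k)) t
        + t ^ (k - 2) * (y t) ^ (-k) * t₂ ^ (1 - k) * M ^ (p + 1) ≤ 0)
    (g : ℝ → ℝ)
    (hg : ∀ s : ℝ, g s = 1 / (k - 2) + s - ((k - 1) / (k - 2)) * s ^ ((k - 2) / (k - 1))) :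
    ∀ t ∈ Set.Ioo t₁ t₂,
      (M ^ (p + 1 - k) * (k - 2) / (k - 1)) * t ^ (2 - k) * g ((t / t₂) ^ (k - 1))
        ≤ (y t) ^ (2 - k) - M ^ (2 - k) :=
  stmt11_general N hN p k t₁ t₂ M hk ht ht2 hM y hy hpos hbd hmono hyt2 hineq g hg
end
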